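/- Let a be a Wiener-class sequence and let E be a semi-infinite real matrix with the decay property, and set A := T(a) + E (entrywise sum). Then ‖A‖_∞ ≥ ‖a‖_W. -/

import Mathlib

open Filter Topology

/-- Every row of `A` is absolutely summable. -/
def RowsSummable (A : ℕ → ℕ → ℝ) : Prop := ∀ i, Summable fun j => |A i j|

/-- The infinity norm of a semi-infinite matrix: the supremum of the row sums. -/
noncomputable def normInf (A : ℕ → ℕ → ℝ) : ℝ := ⨆ i, ∑' j, |A i j|

/-- `A` is bounded: all row sums are finite and their supremum is finite. -/
def MatBounded (A : ℕ → ℕ → ℝ) : Prop :=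
  RowsSummable A ∧ BddAbove (Set.range fun i => ∑' j, |A i j|)

/-- `A` has the decay property: all row sums are finite and tend to zero. -/
def HasDecay (A : ℕ → ℕ → ℝ) : Prop :=
  RowsSummable A ∧ Tendsto (fun i => ∑' j, |A i j|) atTop (𝓝 0)

/-- The semi-infinite Toeplitz matrix associated with a two-sided sequence:
`T(a)_{ij} = a_{j−i}`. -/
noncomputable def Toep (a : ℤ → ℝ) : ℕ → ℕ → ℝ := fun i j => a ((j : ℤ) - (i : ℤ))

/-- Convolution of two-sided sequences. -/
noncomputable def zconv (a b : ℤ → ℝ) : ℤ → ℝ := fun n => ∑' k : ℤ, a k * b (n - k)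

/-! The `i`-th row of `T(a)` has sum `∑_{n ≥ -i} |a n|`, which tends to `‖a‖_W` as `i → ∞`.
By the triangle inequality that row sum is at most `‖T(a) + E‖_∞ + w_i`, and `w_i → 0`. -/

lemma natCast_sub_injective (i : ℕ) : Function.Injective fun j : ℕ => (j : ℤ) - i := by
  intro x y h
  simpa using sub_left_injective h

lemma tendsto_tsum_natCast_sub_atTop {G : Type*} [NormedAddCommGroup G] [CompleteSpace G]
    {f : ℤ → G} (hf : Summable fun n => ‖f n‖) :
    Tendsto (fun i : ℕ => ∑' j : ℕ, f ((j : ℤ) - i)) atTop (𝓝 (∑' n, f n)) := by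
  have hrow (i : ℕ) :
      ∑' j : ℕ, f ((j : ℤ) - i) = ∑' n, (Set.Ici (-(i : ℤ))).indicator f n := by
    rw [← (natCast_sub_injective i).tsum_eq]
    · refine tsum_congr fun j => ?_
      rw [Set.indicator_of_mem (by simp)]
    · intro n hn
      have : -(i : ℤ) ≤ n := by simpa using Set.mem_of_indicator_ne_zero hn
      exact ⟨(n + i).toNat, by simp only [Int.ofNat_toNat]; omega⟩
  simp_rw [hrow]
  refine tendsto_tsum_of_dominated_convergence hf (fun n => ?_)
    (Eventually.of_forall fun i n => norm_indicator_le_norm_self _ _)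
  refine tendsto_const_nhds.congr' ?_
  filter_upwards [eventually_ge_atTop (-n).toNat] with i hi
  rw [Set.indicator_of_mem (by simp only [Set.mem_Ici]; omega)]

lemma RowsSummable.add {A B : ℕ → ℕ → ℝ} (hA : RowsSummable A) (hB : RowsSummable B) :
    RowsSummable fun i j => A i j + B i j := fun i =>
  .of_nonneg_of_le (fun _ => abs_nonneg _) (fun _ => abs_add_le _ _) ((hA i).add (hB i))

lemma tsum_abs_add_le {A B : ℕ → ℕ → ℝ} (hA : RowsSummable A) (hB : RowsSummable B) (i : ℕ) :
    ∑' j, |A i j + B i j| ≤ ∑' j, |A i j| + ∑' j, |B i j| := by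
  rw [← (hA i).tsum_add (hB i)]
  exact (hA.add hB i).tsum_le_tsum (fun _ => abs_add_le _ _) ((hA i).add (hB i))

lemma tsum_abs_le_tsum_abs_add_add_tsum_abs {A B : ℕ → ℕ → ℝ} (hA : RowsSummable A)
    (hB : RowsSummable B) (i : ℕ) :
    ∑' j, |A i j| ≤ ∑' j, |A i j + B i j| + ∑' j, |B i j| := by
  have hB' : RowsSummable fun i j => -B i j := by simpa [RowsSummable] using hB
  simpa using tsum_abs_add_le (hA.add hB) hB' i

lemma MatBounded.add {A B : ℕ → ℕ → ℝ} (hA : MatBounded A) (hB : MatBounded B) :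
    MatBounded fun i j => A i j + B i j := by
  obtain ⟨CA, hCA⟩ := hA.2
  obtain ⟨CB, hCB⟩ := hB.2
  refine ⟨hA.1.add hB.1, CA + CB, ?_⟩
  rintro _ ⟨i, rfl⟩
  exact (tsum_abs_add_le hA.1 hB.1 i).trans (add_le_add (hCA ⟨i, rfl⟩) (hCB ⟨i, rfl⟩))

lemma HasDecay.matBounded {A : ℕ → ℕ → ℝ} (hA : HasDecay A) : MatBounded A :=
  ⟨hA.1, hA.2.bddAbove_range⟩

lemma matBounded_toep {a : ℤ → ℝ} (ha : Summable fun n => |a n|) : MatBounded (Toep a) := by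
  refine ⟨fun i => ha.comp_injective (natCast_sub_injective i), ∑' n, |a n|, ?_⟩
  rintro _ ⟨i, rfl⟩
  exact tsum_comp_le_tsum_of_inj ha (fun _ => abs_nonneg _) (natCast_sub_injective i)

lemma MatBounded.tsum_abs_le_normInf {A : ℕ → ℕ → ℝ} (hA : MatBounded A) (i : ℕ) :
    ∑' j, |A i j| ≤ normInf A :=
  le_ciSup hA.2 i

theorem stmt7 (a : ℤ → ℝ) (ha : Summable fun n => |a n|)
    (E : ℕ → ℕ → ℝ) (hE : HasDecay E) :
    (∑' n : ℤ, |a n|) ≤ normInf (fun i j => Toep a i j + E i j) := by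
  have hT := matBounded_toep ha
  have hrow : Tendsto (fun i => ∑' j, |Toep a i j|) atTop (𝓝 (∑' n, |a n|)) :=
    tendsto_tsum_natCast_sub_atTop (by simpa using ha)
  have hbound : Tendsto (fun i => normInf (fun i j => Toep a i j + E i j) + ∑' j, |E i j|)
      atTop (𝓝 (normInf fun i j => Toep a i j + E i j)) := by
    simpa using tendsto_const_nhds.add hE.2
  refine le_of_tendsto_of_tendsto' hrow hbound fun i => ?_
  calc ∑' j, |Toep a i j| ≤ ∑' j, |Toep a i j + E i j| + ∑' j, |E i j| :=
        tsum_abs_le_tsum_abs_add_add_tsum_abs hT.1 hE.1 i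
    _ ≤ _ := by gcongr; exact (hT.add hE.matBounded).tsum_abs_le_normInf i
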